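/- arXiv:1108.3042 — 4 statements merged into one kernel-verified Lean document; each statement's English description precedes it below -/
import Mathlib

section
/- For any finite word w, the number of distinct palindromic factors of w (including the empty word) is at most |w| + 1. -/
/-- The number of distinct palindromic factors of a finite word `w`
(including the empty word) is at most `|w| + 1`. -/
theorem palindromic_factors_le {A : Type*} (w : List A) :
    {v : List A | v <:+: w ∧ v.reverse = v}.ncard ≤ w.length + 1 := by
  classical
  set S := {v : List A | v <:+: w ∧ v.reverse = v} with hS
  set f : List A → ℕ := fun v => sInf {n | v <:+ w.take n} with hf
  have hex : ∀ v ∈ S, v <:+ w.take (f v) ∧ f v ≤ w.length := by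
    rintro v ⟨⟨s, t, h⟩, -⟩
    have h1 : v <:+ w.take (s ++ v).length := by
      rw [← h, List.take_left]
      exact List.suffix_append s v
    refine ⟨Nat.sInf_mem (⟨_, h1⟩ : {n | v <:+ w.take n}.Nonempty), le_trans (Nat.sInf_le h1) ?_⟩
    rw [← h]; simp
  -- key: if a, b palindromes, a strict suffix of b, b <:+ w.take n, then a ends earlier
  have key : ∀ a b : List A, a.reverse = a → b.reverse = b → a <:+ b → a ≠ b →
      ∀ n, b <:+ w.take n → f a < n := by
    intro a b hpa hpb hab hne n hbn
    -- a is a prefix of b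
    have hpre : a <+: b := by
      rw [← hpa, ← hpb] at hab
      exact List.reverse_suffix.mp hab
    obtain ⟨t, rfl⟩ := hpre
    have ht : t ≠ [] := by rintro rfl; simp at hne
    obtain ⟨p, hp⟩ := hbn
    have hlt : p.length + a.length < n := by
      have := congrArg List.length hp
      simp [List.length_take] at this
      have httl : 0 < t.length := List.length_pos_iff.mpr ht
      omega
    have h2 : a <:+ w.take (p.length + a.length) := by
      have : w.take (p.length + a.length) = p ++ a := by
        have h3 : (w.take n).take (p.length + a.length) = p ++ a := by
          rw [← hp, ← List.append_assoc]
          exact List.take_left' (by simp)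
        rwa [List.take_take, min_eq_left hlt.le] at h3
      rw [this]; exact List.suffix_append p a
    exact lt_of_le_of_lt (Nat.sInf_le h2) hlt
  have hinj : Set.InjOn f S := by
    intro u hu v hv huv
    by_contra hne
    have h1 := (hex u hu).1
    have h2 := (hex v hv).1
    rw [huv] at h1
    rcases List.suffix_or_suffix_of_suffix h1 h2 with h | h
    · have := key u v hu.2 hv.2 h hne (f v) h2
      omega
    · have := key v u hv.2 hu.2 h (Ne.symm hne) (f v) h1
      omega
  have := Set.ncard_le_ncard_of_injOn f
    (fun a ha => by
      simpa using Finset.mem_coe.mpr (Finset.mem_range.mpr (Nat.lt_succ_of_le (hex a ha).2)))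
    hinj (Finset.range (w.length + 1)).finite_toSet
  rwa [Set.ncard_coe_finset, Finset.card_range] at this
end

section
/- If the language of an infinite word u is closed under a finite group G of morphisms and antimorphisms containing at least one antimorphism, then u is recurrent. -/
def IsMorphism {A : Type*} (f : List A → List A) : Prop :=
  ∀ v w : List A, f (v ++ w) = f v ++ f w

def IsAntimorphism {A : Type*} (f : List A → List A) : Prop :=
  ∀ v w : List A, f (v ++ w) = f w ++ f v

structure AMGroup (A : Type*) where
  carrier : Set (List A → List A)
  finite : carrier.Finite
  id_mem : id ∈ carrier
  comp_mem : ∀ f ∈ carrier, ∀ g ∈ carrier, f ∘ g ∈ carrier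
  inv_mem : ∀ f ∈ carrier, ∃ g ∈ carrier, f ∘ g = id ∧ g ∘ f = id
  morph_or_anti : ∀ f ∈ carrier, IsMorphism f ∨ IsAntimorphism f

def FactorAt {A : Type*} (u : ℕ → A) (w : List A) (i : ℕ) : Prop :=
  w = (List.range w.length).map (fun j => u (i + j))

def IsFactor {A : Type*} (u : ℕ → A) (w : List A) : Prop :=
  ∃ i : ℕ, FactorAt u w i

lemma factorAt_range {A : Type*} (u : ℕ → A) (m n : ℕ) :
    FactorAt u ((List.range n).map (fun j => u (m + j))) m := by
  unfold FactorAt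
  simp

lemma map_range_shift {A : Type*} (u : ℕ → A) (a b n : ℕ) :
    List.map ((fun j => u (a + j)) ∘ fun t => b + t) (List.range n)
      = List.map (fun j => u (a + b + j)) (List.range n) := by
  apply List.map_congr_left
  intro j _
  simp only [Function.comp_apply]
  rw [add_assoc]

lemma factorAt_append {A : Type*} (u : ℕ → A) {x y : List A} {i : ℕ}
    (hx : FactorAt u x i) (hy : FactorAt u y (i + x.length)) :
    FactorAt u (x ++ y) i := by
  unfold FactorAt at *
  rw [List.length_append, List.range_add, List.map_append, List.map_map, ← hx,
    map_range_shift]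
  congr 1

lemma factorAt_of_append_right {A : Type*} (u : ℕ → A) {x y : List A} {k : ℕ}
    (h : FactorAt u (x ++ y) k) : FactorAt u y (k + x.length) := by
  unfold FactorAt at *
  rw [List.length_append, List.range_add, List.map_append, List.map_map] at h
  have := List.append_inj_right h (by simp)
  rw [map_range_shift] at this
  exact this

lemma anti_nil {A : Type*} {Φ : List A → List A} (hΦ : IsAntimorphism Φ) :
    Φ [] = [] := by
  have h := hΦ [] []
  simp at h
  exact h

lemma anti_length_le {A : Type*} {Φ : List A → List A} (hΦ : IsAntimorphism Φ)
    (hinj : Function.Injective Φ) : ∀ x : List A, x.length ≤ (Φ x).length := by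
  intro x
  induction x with
  | nil => simp
  | cons a t ih =>
    have h : Φ (a :: t) = Φ t ++ Φ [a] := by
      have := hΦ [a] t; simpa using this
    have hne : Φ [a] ≠ [] := by
      intro hc
      have : ([a] : List A) = [] := hinj (by rw [hc, anti_nil hΦ])
      simp at this
    have : 1 ≤ (Φ [a]).length := List.length_pos_iff.mpr hne
    rw [h, List.length_append]
    simp only [List.length_cons]
    omega

/-- If the language of an infinite word `u` is closed under a finite group `G`
of morphisms and antimorphisms containing at least one antimorphism, then `u`
is recurrent. -/
theorem closed_under_G_implies_recurrent {A : Type*} [Fintype A] (u : ℕ → A)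
    (G : AMGroup A)
    (hclosed : ∀ w : List A, IsFactor u w → ∀ f ∈ G.carrier, IsFactor u (f w))
    (hanti : ∃ Θ ∈ G.carrier, IsAntimorphism Θ) :
    ∀ w : List A, IsFactor u w → ∀ N : ℕ, ∃ i ≥ N, FactorAt u w i := by
  obtain ⟨Θ, hΘmem, hΘanti⟩ := hanti
  obtain ⟨Φ, hΦmem, hΘΦ, hΦΘ⟩ := G.inv_mem Θ hΘmem
  -- Φ is injective (Θ is its left inverse)
  have hinj : Function.Injective Φ := Function.LeftInverse.injective
    (g := Θ) (fun x => congrFun hΘΦ x)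
  -- Φ is an antimorphism
  have hΦanti : IsAntimorphism Φ := by
    rcases G.morph_or_anti Φ hΦmem with hm | ha
    · -- then all words commute
      have hcomm : ∀ v w : List A, v ++ w = w ++ v := by
        intro v w
        have hid : ∀ x : List A, Φ (Θ x) = x := fun x => congrFun hΦΘ x
        have h1 : Φ (Θ (v ++ w)) = v ++ w := hid (v ++ w)
        rw [hΘanti v w, hm (Θ w) (Θ v), hid w, hid v] at h1
        exact h1.symm
      intro v w
      rw [hm v w, hcomm (Φ v) (Φ w)]
    · exact ha
  intro w hw N
  -- Θ w is a factor, at position i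
  obtain ⟨i, hi⟩ := hclosed w hw Θ hΘmem
  -- r : the N letters following Θ w
  set r : List A := (List.range N).map (fun j => u (i + (Θ w).length + j)) with hr
  have hrfac : FactorAt u r (i + (Θ w).length) := factorAt_range u _ _
  have hrlen : r.length = N := by simp [hr]
  have hq : FactorAt u (Θ w ++ r) i := factorAt_append u hi hrfac
  -- Φ (Θ w ++ r) = Φ r ++ w is a factor
  obtain ⟨k, hk⟩ := hclosed (Θ w ++ r) ⟨i, hq⟩ Φ hΦmem
  have heq : Φ (Θ w ++ r) = Φ r ++ w := by
    rw [hΦanti (Θ w) r]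
    congr 1
    exact congrFun hΦΘ w
  rw [heq] at hk
  refine ⟨k + (Φ r).length, ?_, factorAt_of_append_right u hk⟩
  have := anti_length_le hΦanti hinj r
  omega
end

section
/- For every finite word w over alphabet A and every element μ of G, D_G(μ(w)) = D_G(w), where D_G(w) = |w| + 1 − #Pal_G(w) − γ_G(w). -/
/-- `v` is a `G`-palindrome: fixed by some antimorphism of `G`. -/
def GPal {A : Type*} (G : AMGroup A) (v : List A) : Prop :=
  ∃ Θ ∈ G.carrier, IsAntimorphism Θ ∧ Θ v = v

/-- The `G`-orbit (equivalence class) `[v]` of a word `v`. -/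
def orbitG {A : Type*} (G : AMGroup A) (v : List A) : Set (List A) :=
  {x : List A | ∃ μ ∈ G.carrier, x = μ v}

/-- `Pal_G(w)`: the set of `G`-classes of `G`-palindromic factors of `w`
(including the empty word). -/
def PalG {A : Type*} (G : AMGroup A) (w : List A) : Set (Set (List A)) :=
  {S | ∃ v : List A, v <:+: w ∧ GPal G v ∧ S = orbitG G v}

/-- `γ_G(w)`: the number of classes `[a]` of letters occurring in `w` that are
fixed by no antimorphism of `G`. -/
noncomputable def gammaG {A : Type*} (G : AMGroup A) (w : List A) : ℕ :=
  {S : Set (List A) | ∃ a : A, a ∈ w ∧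
    (∀ Θ ∈ G.carrier, IsAntimorphism Θ → Θ [a] ≠ [a]) ∧ S = orbitG G [a]}.ncard

/-- The `G`-defect of a finite word. -/
noncomputable def DG {A : Type*} (G : AMGroup A) (w : List A) : ℕ :=
  w.length + 1 - (PalG G w).ncard - gammaG G w

namespace DGaux

variable {A : Type*}

lemma map_nil (G : AMGroup A) {f : List A → List A} (hf : f ∈ G.carrier) :
    f [] = ([] : List A) := by
  have h0 : f ([] ++ []) = f [] ++ f [] := by
    rcases G.morph_or_anti f hf with h | h
    · exact h [] []
    · exact h [] []
  simp only [List.append_nil] at h0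
  have hl : (f []).length = (f []).length + (f []).length := by
    conv_lhs => rw [h0]; simp
  have : (f []).length = 0 := by omega
  exact List.length_eq_zero_iff.mp this

lemma exists_inv (G : AMGroup A) {f : List A → List A} (hf : f ∈ G.carrier) :
    ∃ g ∈ G.carrier, (∀ x, f (g x) = x) ∧ (∀ x, g (f x) = x) := by
  obtain ⟨g, hg, h1, h2⟩ := G.inv_mem f hf
  exact ⟨g, hg, fun x => congrFun h1 x, fun x => congrFun h2 x⟩

lemma injective (G : AMGroup A) {f : List A → List A} (hf : f ∈ G.carrier) :
    Function.Injective f := by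
  obtain ⟨g, hg, h1, h2⟩ := exists_inv G hf
  intro x y hxy
  rw [← h2 x, ← h2 y, hxy]

lemma surj_letter (G : AMGroup A) {f : List A → List A} (hf : f ∈ G.carrier)
    (a : A) : ∃ c : A, f [c] = [a] := by
  obtain ⟨g, hg, h1, h2⟩ := exists_inv G hf
  have hu : f (g [a]) = [a] := h1 [a]
  cases hgu : g [a] with
  | nil =>
    rw [hgu, map_nil G hf] at hu
    exact absurd hu (by simp)
  | cons c t =>
    rw [hgu] at hu
    have hct : (c :: t : List A) = [c] ++ t := rfl
    have hfc : f [c] ≠ [] := by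
      intro h
      have := injective G hf (h.trans (map_nil G hf).symm)
      simp at this
    rcases G.morph_or_anti f hf with h | h
    · rw [hct, h [c] t] at hu
      have hlen := congrArg List.length hu
      simp only [List.length_append, List.length_singleton] at hlen
      have h1c : (f [c]).length ≥ 1 := List.length_pos_iff.mpr hfc
      have hft : (f t).length = 0 := by omega
      have hft' : f t = [] := List.length_eq_zero_iff.mp hft
      rw [hft', List.append_nil] at hu
      exact ⟨c, hu⟩
    · rw [hct, h [c] t] at hu
      have hlen := congrArg List.length hu
      simp only [List.length_append, List.length_singleton] at hlen
      have h1c : (f [c]).length ≥ 1 := List.length_pos_iff.mpr hfc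
      have hft : (f t).length = 0 := by omega
      have hft' : f t = [] := List.length_eq_zero_iff.mp hft
      rw [hft', List.nil_append] at hu
      exact ⟨c, hu⟩

lemma letter_image (G : AMGroup A) {f : List A → List A} (hf : f ∈ G.carrier)
    (a : A) : ∃ b : A, f [a] = [b] := by
  obtain ⟨g, hg, h1, h2⟩ := exists_inv G hf
  obtain ⟨c, hc⟩ := surj_letter G hg a
  · exact ⟨c, by rw [← hc, h1 [c]]⟩

lemma length_pres (G : AMGroup A) {f : List A → List A} (hf : f ∈ G.carrier)
    (v : List A) : (f v).length = v.length := by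
  induction v with
  | nil => rw [map_nil G hf]
  | cons a t ih =>
    obtain ⟨b, hb⟩ := letter_image G hf a
    have hct : (a :: t : List A) = [a] ++ t := rfl
    rcases G.morph_or_anti f hf with h | h
    · rw [hct, h [a] t, hb]
      simp only [List.length_append, List.length_cons, List.length_nil, List.length_singleton, ih]
    · rw [hct, h [a] t, hb]
      simp only [List.length_append, List.length_cons, List.length_nil, List.length_singleton, ih]
      omega

lemma infix_pres (G : AMGroup A) {f : List A → List A} (hf : f ∈ G.carrier)
    {v w : List A} (hvw : v <:+: w) : f v <:+: f w := by
  obtain ⟨s, t, rfl⟩ := hvw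
  rcases G.morph_or_anti f hf with h | h
  · exact ⟨f s, f t, by rw [h (s ++ v) t, h s v]⟩
  · exact ⟨f t, f s, by rw [h (s ++ v) t, h s v, List.append_assoc]⟩

lemma orbit_eq (G : AMGroup A) {μ : List A → List A} (hμ : μ ∈ G.carrier)
    (v : List A) : orbitG G (μ v) = orbitG G v := by
  obtain ⟨g, hg, h1, h2⟩ := exists_inv G hμ
  ext x
  constructor
  · rintro ⟨ν, hν, rfl⟩
    exact ⟨ν ∘ μ, G.comp_mem ν hν μ hμ, rfl⟩
  · rintro ⟨ν, hν, rfl⟩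
    exact ⟨ν ∘ g, G.comp_mem ν hν g hg, by simp [Function.comp, h2 v]⟩

lemma inv_morph (G : AMGroup A) {f g : List A → List A}
    (hfm : IsMorphism f) (h1 : ∀ x, f (g x) = x) (h2 : ∀ x, g (f x) = x) :
    IsMorphism g := by
  intro v w
  conv_lhs => rw [← h1 v, ← h1 w, ← hfm]
  rw [h2]

lemma inv_anti (G : AMGroup A) {f g : List A → List A}
    (hfm : IsAntimorphism f) (h1 : ∀ x, f (g x) = x) (h2 : ∀ x, g (f x) = x) :
    IsAntimorphism g := by
  intro v w
  conv_lhs => rw [← h1 v, ← h1 w, ← hfm]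
  rw [h2]

lemma gpal_pres (G : AMGroup A) {μ : List A → List A} (hμ : μ ∈ G.carrier)
    {v : List A} (hv : GPal G v) : GPal G (μ v) := by
  obtain ⟨Θ, hΘ, hΘa, hΘv⟩ := hv
  obtain ⟨g, hg, h1, h2⟩ := exists_inv G hμ
  refine ⟨μ ∘ (Θ ∘ g), G.comp_mem μ hμ (Θ ∘ g) (G.comp_mem Θ hΘ g hg), ?_, ?_⟩
  · rcases G.morph_or_anti μ hμ with h | h
    · have hgm := inv_morph G h h1 h2
      intro x y
      simp only [Function.comp]
      rw [hgm x y, hΘa (g x) (g y), h]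
    · have hga := inv_anti G h h1 h2
      intro x y
      simp only [Function.comp]
      rw [hga x y, hΘa (g y) (g x), h]
  · simp only [Function.comp]
    rw [h2 v, hΘv]

lemma palG_mono (G : AMGroup A) {μ : List A → List A} (hμ : μ ∈ G.carrier)
    (w : List A) : PalG G w ⊆ PalG G (μ w) := by
  rintro S ⟨v, hinf, hpal, rfl⟩
  exact ⟨μ v, infix_pres G hμ hinf, gpal_pres G hμ hpal, (orbit_eq G hμ v).symm⟩

lemma palG_eq (G : AMGroup A) {μ : List A → List A} (hμ : μ ∈ G.carrier)
    (w : List A) : PalG G (μ w) = PalG G w := by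
  obtain ⟨g, hg, h1, h2⟩ := exists_inv G hμ
  apply Set.Subset.antisymm
  · have := palG_mono G hg (μ w)
    rwa [h2 w] at this
  · exact palG_mono G hμ w

lemma gammaSet_mono (G : AMGroup A) {μ : List A → List A} (hμ : μ ∈ G.carrier)
    (w : List A) :
    {S : Set (List A) | ∃ a : A, a ∈ w ∧
      (∀ Θ ∈ G.carrier, IsAntimorphism Θ → Θ [a] ≠ [a]) ∧ S = orbitG G [a]} ⊆
    {S : Set (List A) | ∃ a : A, a ∈ μ w ∧
      (∀ Θ ∈ G.carrier, IsAntimorphism Θ → Θ [a] ≠ [a]) ∧ S = orbitG G [a]} := by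
  obtain ⟨g, hg, h1, h2⟩ := exists_inv G hμ
  rintro S ⟨a, haw, hnofix, rfl⟩
  obtain ⟨b, hb⟩ := letter_image G hμ a
  have hainf : [a] <:+: w := by
    obtain ⟨s, t, rfl⟩ := List.append_of_mem haw
    exact ⟨s, t, by simp⟩
  refine ⟨b, ?_, ?_, ?_⟩
  · have := infix_pres G hμ hainf
    rw [hb] at this
    exact this.subset (List.mem_singleton.mpr rfl)
  · intro Θ hΘ hΘa hcon
    have hbp : GPal G ([b] : List A) := ⟨Θ, hΘ, hΘa, hcon⟩
    have := gpal_pres G hg hbp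
    rw [← hb, h2] at this
    obtain ⟨Θ', hΘ', ha', hf'⟩ := this
    exact hnofix Θ' hΘ' ha' hf'
  · rw [← hb, orbit_eq G hμ]

lemma gammaG_eq (G : AMGroup A) {μ : List A → List A} (hμ : μ ∈ G.carrier)
    (w : List A) : gammaG G (μ w) = gammaG G w := by
  obtain ⟨g, hg, h1, h2⟩ := exists_inv G hμ
  unfold gammaG
  congr 1
  apply Set.Subset.antisymm
  · have := gammaSet_mono G hg (μ w)
    rwa [h2 w] at this
  · exact gammaSet_mono G hμ w

end DGaux

/-- The `G`-defect is invariant under the elements of `G`: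
`D_G(μ(w)) = D_G(w)` for every `μ ∈ G`. -/
theorem DG_invariant {A : Type*} [Fintype A] (G : AMGroup A)
    (hanti : ∃ Θ ∈ G.carrier, IsAntimorphism Θ)
    (w : List A) (μ : List A → List A) (hμ : μ ∈ G.carrier) :
    DG G (μ w) = DG G w := by
  unfold DG
  rw [DGaux.length_pres G hμ w, DGaux.palG_eq G hμ w, DGaux.gammaG_eq G hμ w]
end

section
/- For every finite word w and letter a, the G-defect satisfies D_G(w) ≤ D_G(wa) ≤ D_G(w) + 1. -/
/-
A new `G`-palindromic class of `wa` is the class of a `G`-palindromic suffix `u`. If `v`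
is a shorter such suffix and `Θ u = u` for an antimorphism `Θ`, then `Θ v` is a prefix
of `u` missing its last letter, hence a factor of `w` in the class of `v`; so `#Pal_G`
grows by at most one. When it does grow and `[a]` is not `G`-palindromic, `u` is neither
empty (a factor of `w`) nor `[a]`, so `Θ [a]`, the first letter of `u`, is a letter of `w`
in the class of `a`, and `γ_G` does not grow.
-/

section

variable {A : Type*} {G : AMGroup A} {f g μ : List A → List A} {u v w w' : List A} {a : A}

theorem IsMorphism.map_nil (hf : IsMorphism f) : f [] = [] := by
  simpa using (hf [] []).symm

theorem IsAntimorphism.map_nil (hf : IsAntimorphism f) : f [] = [] := by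
  simpa using (hf [] []).symm

theorem IsMorphism.of_inverse (hf : IsMorphism f) (hgf : Function.LeftInverse g f)
    (hfg : Function.RightInverse g f) : IsMorphism g := fun v u =>
  hgf.injective <| by rw [hfg, hf, hfg, hfg]

theorem IsAntimorphism.of_inverse (hf : IsAntimorphism f) (hgf : Function.LeftInverse g f)
    (hfg : Function.RightInverse g f) : IsAntimorphism g := fun v u =>
  hgf.injective <| by rw [hfg, hf, hfg, hfg]

theorem IsMorphism.comp_isAntimorphism (hf : IsMorphism f) (hg : IsAntimorphism g) :
    IsAntimorphism (f ∘ g) := fun v u => by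
  simp only [Function.comp_apply]
  rw [hg, hf]

theorem IsAntimorphism.comp_isMorphism (hf : IsAntimorphism f) (hg : IsMorphism g) :
    IsAntimorphism (f ∘ g) := fun v u => by
  simp only [Function.comp_apply]
  rw [hg, hf]

theorem IsAntimorphism.comp (hf : IsAntimorphism f) (hg : IsAntimorphism g) :
    IsMorphism (f ∘ g) := fun v u => by
  simp only [Function.comp_apply]
  rw [hg, hf]

namespace AMGroup

theorem map_nil (hf : f ∈ G.carrier) : f [] = [] :=
  (G.morph_or_anti f hf).elim IsMorphism.map_nil IsAntimorphism.map_nil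

theorem exists_inverse (hf : f ∈ G.carrier) :
    ∃ g ∈ G.carrier, Function.LeftInverse g f ∧ Function.RightInverse g f := by
  obtain ⟨g, hg, hfg, hgf⟩ := G.inv_mem f hf
  exact ⟨g, hg, congrFun hgf, congrFun hfg⟩

theorem length_apply_append (hf : f ∈ G.carrier) (v u : List A) :
    (f (v ++ u)).length = (f v).length + (f u).length := by
  rcases G.morph_or_anti f hf with hm | hm <;> simp only [hm v u, List.length_append]
  omega

theorem length_le_length_apply (hf : f ∈ G.carrier) (v : List A) : v.length ≤ (f v).length := by
  obtain ⟨g, -, hgf, -⟩ := G.exists_inverse hf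
  induction v with
  | nil => simp
  | cons b t ih =>
    have hb : f [b] ≠ [] := fun h =>
      List.cons_ne_nil b [] <| hgf.injective (h.trans (map_nil hf).symm)
    rw [← List.singleton_append, length_apply_append hf, List.length_append]
    have := List.length_pos_iff.mpr hb
    simp only [List.length_singleton]
    omega

theorem length_apply (hf : f ∈ G.carrier) (v : List A) : (f v).length = v.length := by
  obtain ⟨g, hg, hgf, -⟩ := G.exists_inverse hf
  have := length_le_length_apply hg (f v)
  rw [hgf v] at this
  exact le_antisymm this (length_le_length_apply hf v)

theorem exists_apply_singleton (hf : f ∈ G.carrier) (a : A) : ∃ b, f [a] = [b] :=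
  List.length_eq_one_iff.mp (length_apply hf [a])

end AMGroup

theorem orbitG_apply (hμ : μ ∈ G.carrier) (v : List A) : orbitG G (μ v) = orbitG G v := by
  obtain ⟨g, hg, hgμ, -⟩ := G.exists_inverse hμ
  ext x
  constructor
  · rintro ⟨ν, hν, rfl⟩
    exact ⟨ν ∘ μ, G.comp_mem ν hν μ hμ, rfl⟩
  · rintro ⟨ν, hν, rfl⟩
    exact ⟨ν ∘ g, G.comp_mem ν hν g hg, by simp [hgμ v]⟩

theorem GPal.nil (h : GPal G v) : GPal G [] := by
  obtain ⟨Θ, hΘ, hanti, -⟩ := h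
  exact ⟨Θ, hΘ, hanti, hanti.map_nil⟩

theorem GPal.apply (h : GPal G v) (hμ : μ ∈ G.carrier) : GPal G (μ v) := by
  obtain ⟨Θ, hΘ, hanti, hfix⟩ := h
  obtain ⟨g, hg, hgμ, hμg⟩ := G.exists_inverse hμ
  refine ⟨μ ∘ Θ ∘ g, G.comp_mem μ hμ _ (G.comp_mem Θ hΘ g hg), ?_, ?_⟩
  · rcases G.morph_or_anti μ hμ with hm | hm
    · exact hm.comp_isAntimorphism (hanti.comp_isMorphism (hm.of_inverse hgμ hμg))
    · exact hm.comp_isMorphism (hanti.comp (hm.of_inverse hgμ hμg))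
  · simp [hgμ v, hfix]

theorem gpal_apply_iff (hμ : μ ∈ G.carrier) : GPal G (μ v) ↔ GPal G v := by
  obtain ⟨g, hg, hgμ, -⟩ := G.exists_inverse hμ
  refine ⟨fun h => ?_, fun h => h.apply hμ⟩
  simpa [hgμ v] using h.apply hg

theorem palG_finite (G : AMGroup A) (w : List A) : (PalG G w).Finite := by
  refine ((List.finite_toSet w.sublists).image (orbitG G)).subset ?_
  rintro S ⟨v, hv, -, rfl⟩
  exact ⟨v, List.mem_sublists.mpr hv.sublist, rfl⟩

theorem palG_mono (G : AMGroup A) (h : w <:+: w') : PalG G w ⊆ PalG G w' := by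
  rintro S ⟨v, hv, hpal, rfl⟩
  exact ⟨v, hv.trans h, hpal, rfl⟩

def gammaSet (G : AMGroup A) (w : List A) : Set (Set (List A)) :=
  {S | ∃ a ∈ w, ¬ GPal G [a] ∧ S = orbitG G [a]}

theorem gammaG_eq_ncard (G : AMGroup A) (w : List A) : gammaG G w = (gammaSet G w).ncard := by
  simp [gammaG, gammaSet, GPal]

theorem gammaSet_finite (G : AMGroup A) (w : List A) : (gammaSet G w).Finite := by
  refine ((List.finite_toSet w).image fun b => orbitG G [b]).subset ?_
  rintro S ⟨b, hb, -, rfl⟩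
  exact ⟨b, hb, rfl⟩

theorem gammaSet_mono (G : AMGroup A) (h : w ⊆ w') : gammaSet G w ⊆ gammaSet G w' := by
  rintro S ⟨b, hb, hpal, rfl⟩
  exact ⟨b, h hb, hpal, rfl⟩

theorem gammaG_le_of_subset (h : gammaSet G w ⊆ gammaSet G w') : gammaG G w ≤ gammaG G w' := by
  simpa only [gammaG_eq_ncard] using Set.ncard_le_ncard h (gammaSet_finite G w')

theorem gammaG_append_singleton_le_succ (G : AMGroup A) (w : List A) (a : A) :
    gammaG G (w ++ [a]) ≤ gammaG G w + 1 := by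
  have hsub : gammaSet G (w ++ [a]) ⊆ insert (orbitG G [a]) (gammaSet G w) := by
    rintro S ⟨b, hb, hpal, rfl⟩
    rcases List.mem_append.mp hb with hb | hb
    · exact Or.inr ⟨b, hb, hpal, rfl⟩
    · rw [List.mem_singleton.mp hb]
      exact Or.inl rfl
  rw [gammaG_eq_ncard, gammaG_eq_ncard]
  exact (Set.ncard_le_ncard hsub ((gammaSet_finite G w).insert _)).trans (Set.ncard_insert_le _ _)

theorem List.infix_of_append_append_eq_append_singleton {x y z : List A}
    (h : x ++ y ++ z = w ++ [a]) (hz : z ≠ []) : y <:+: w := by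
  obtain ⟨z', c, rfl⟩ := (List.eq_nil_or_concat z).resolve_left hz
  rw [List.concat_eq_append, ← List.append_assoc] at h
  exact ⟨x, z', (List.append_inj' h rfl).1⟩

theorem GPal.exists_apply_infix_of_suffix (hu : GPal G u) (huw : u <:+ w ++ [a])
    (hvu : v <:+ u) (hlt : v.length < u.length) : ∃ μ ∈ G.carrier, μ v <:+: w := by
  obtain ⟨Θ, hΘ, hanti, hfix⟩ := hu
  obtain ⟨p, rfl⟩ := hvu
  obtain ⟨s, hs⟩ := huw
  have hp : Θ p ≠ [] := by
    rw [← List.length_pos_iff, AMGroup.length_apply hΘ]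
    simp only [List.length_append] at hlt
    omega
  rw [← hfix, hanti, ← List.append_assoc] at hs
  exact ⟨Θ, hΘ, List.infix_of_append_append_eq_append_singleton hs hp⟩

theorem orbitG_mem_palG_of_suffix (hu : GPal G u) (huw : u <:+ w ++ [a]) (hv : GPal G v)
    (hvu : v <:+ u) (hlt : v.length < u.length) : orbitG G v ∈ PalG G w := by
  obtain ⟨μ, hμ, hμv⟩ := hu.exists_apply_infix_of_suffix huw hvu hlt
  exact ⟨μ v, hμv, hv.apply hμ, (orbitG_apply hμ v).symm⟩

theorem suffix_of_orbitG_not_mem_palG (hu : u <:+: w ++ [a]) (hpal : GPal G u)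
    (hnew : orbitG G u ∉ PalG G w) : u <:+ w ++ [a] :=
  (List.infix_concat_iff.mp hu).resolve_right fun h => hnew ⟨u, h, hpal, rfl⟩

theorem palG_append_singleton_sdiff_subsingleton (G : AMGroup A) (w : List A) (a : A) :
    (PalG G (w ++ [a]) \ PalG G w).Subsingleton := by
  suffices key : ∀ u v, u <:+: w ++ [a] → GPal G u → orbitG G u ∉ PalG G w →
      v <:+: w ++ [a] → GPal G v → orbitG G v ∉ PalG G w → v.length ≤ u.length → v = u by
    rintro _ ⟨⟨u, hu, hupal, rfl⟩, hunew⟩ _ ⟨⟨v, hv, hvpal, rfl⟩, hvnew⟩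
    rcases le_total v.length u.length with h | h
    · rw [key u v hu hupal hunew hv hvpal hvnew h]
    · rw [key v u hv hvpal hvnew hu hupal hunew h]
  intro u v hu hupal hunew hv hvpal hvnew hle
  have husuf := suffix_of_orbitG_not_mem_palG hu hupal hunew
  have hvu : v <:+ u :=
    List.suffix_of_suffix_length_le (suffix_of_orbitG_not_mem_palG hv hvpal hvnew) husuf hle
  rcases hle.lt_or_eq with hlt | heq
  · exact absurd (orbitG_mem_palG_of_suffix hupal husuf hvpal hvu hlt) hvnew
  · exact hvu.eq_of_length heq

theorem gammaSet_append_singleton_subset_of_nonempty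
    (hN : (PalG G (w ++ [a]) \ PalG G w).Nonempty) :
    gammaSet G (w ++ [a]) ⊆ gammaSet G w := by
  obtain ⟨_, ⟨u, hu, hupal, rfl⟩, hunew⟩ := hN
  rintro S ⟨b, hb, hbpal, rfl⟩
  rcases List.mem_append.mp hb with hb | hb
  · exact ⟨b, hb, hbpal, rfl⟩
  obtain rfl := List.mem_singleton.mp hb
  obtain hnil | ⟨t, rfl, -⟩ :=
    List.suffix_concat_iff.mp (suffix_of_orbitG_not_mem_palG hu hupal hunew)
  · exact absurd ⟨[], List.nil_infix, hupal.nil, by rw [hnil]⟩ hunew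
  have ht : t ≠ [] := by
    rintro rfl
    exact hbpal hupal
  obtain ⟨μ, hμ, hμb⟩ := hupal.exists_apply_infix_of_suffix
    (suffix_of_orbitG_not_mem_palG hu hupal hunew) (List.suffix_append t [b])
    (by simpa [List.length_pos_iff] using ht)
  obtain ⟨c, hc⟩ := AMGroup.exists_apply_singleton hμ b
  rw [hc, List.singleton_infix_iff] at hμb
  refine ⟨c, hμb, ?_, ?_⟩
  · rwa [← hc, gpal_apply_iff hμ]
  · rw [← hc, orbitG_apply hμ]

end

theorem DG_append_letter_general {A : Type*} (G : AMGroup A)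
    (w : List A) (a : A) :
    DG G w ≤ DG G (w ++ [a]) ∧ DG G (w ++ [a]) ≤ DG G w + 1 := by
  set N := PalG G (w ++ [a]) \ PalG G w
  have hPal : N.ncard + (PalG G w).ncard = (PalG G (w ++ [a])).ncard :=
    Set.ncard_sdiff_add_ncard_of_subset (palG_mono G List.infix_append_left) (palG_finite G _)
  have hN : N.ncard ≤ 1 :=
    have hsub := palG_append_singleton_sdiff_subsingleton G w a
    (Set.ncard_le_one hsub.finite).mpr hsub
  have hΓ := gammaG_le_of_subset (gammaSet_mono G (List.subset_append_left w [a]))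
  have hΓ_succ := gammaG_append_singleton_le_succ G w a
  have hΓ_new : N.ncard ≠ 0 → gammaG G (w ++ [a]) ≤ gammaG G w := fun h =>
    gammaG_le_of_subset (gammaSet_append_singleton_subset_of_nonempty
      (Set.nonempty_of_ncard_ne_zero h))
  simp only [DG, List.length_append, List.length_singleton]
  omega

/-- Appending a letter changes the `G`-defect by at most one and never
decreases it: `D_G(w) ≤ D_G(wa) ≤ D_G(w) + 1`. -/
theorem DG_append_letter {A : Type*} [Fintype A] (G : AMGroup A)
    (hanti : ∃ Θ ∈ G.carrier, IsAntimorphism Θ)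
    (w : List A) (a : A) :
    DG G w ≤ DG G (w ++ [a]) ∧ DG G (w ++ [a]) ≤ DG G w + 1 :=
  DG_append_letter_general G w a
end
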